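/- arXiv:1807.08846 — 2 statements merged into one kernel-verified Lean document; each statement's English description precedes it below -/
import Mathlib

section
/- Let 1 <= s <= t and 0 <= g <= s. Let A be the set of vertices a_{s-1}...a_{s-g} followed by s-g+t+1 zeros (so the last s-g+t+1 bits are 0 and the top g a-bits are free) in LeTQ(s,t). Then the open neighborhood N(A) has exactly 2^g(s-g+1) vertices and the closed neighborhood N[A] has exactly 2^g(s-g+2) vertices. -/
/-- Flip bit `k` of the binary string `x`. -/
def bflip {n : ℕ} (x : Fin n → Bool) (k : Fin n) : Fin n → Bool :=
  Function.update x k (!(x k))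

/-- Locally twisted cube adjacency on `n`-bit binary strings:
either flip bit `k` for some `k ≤ 1`; or, for some `k ≥ 2`, flip bits `k` and `k-1`
when bit 0 is `1`, resp. flip only bit `k` when bit 0 is `0`. -/
def cubeAdj (n : ℕ) (x y : Fin n → Bool) : Prop :=
  (∃ k : Fin n, (k : ℕ) ≤ 1 ∧ y = bflip x k) ∨
  (∃ k : Fin n, 2 ≤ (k : ℕ) ∧
    ((∃ h0 : 0 < n, x ⟨0, h0⟩ = true ∧
        y = bflip (bflip x k) ⟨(k : ℕ) - 1, lt_of_le_of_lt (Nat.sub_le _ _) k.isLt⟩) ∨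
     (∃ h0 : 0 < n, x ⟨0, h0⟩ = false ∧ y = bflip x k)))

/-- The locally twisted cube `LTQ_n`. -/
def LTQ (n : ℕ) : SimpleGraph (Fin n → Bool) where
  Adj x y := x ≠ y ∧ (cubeAdj n x y ∨ cubeAdj n y x)
  symm := ⟨fun _ _ h => ⟨h.1.symm, h.2.symm⟩⟩
  loopless := ⟨fun _ h => h.1 rfl⟩

/-- A vertex of `LeTQ(s,t)`: the `a`-bits, the `b`-bits and the bit `c`. -/
abbrev LeTQVert (s t : ℕ) := (Fin s → Bool) × (Fin t → Bool) × Bool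

/-- One-sided adjacency condition of the locally exchanged twisted cube. -/
def LeTQAdjOne (s t : ℕ) (u v : LeTQVert s t) : Prop :=
  (u.1 = v.1 ∧ u.2.1 = v.2.1 ∧ u.2.2 = !v.2.2) ∨
  (u.2.2 = true ∧ v.2.2 = true ∧ u.1 = v.1 ∧ cubeAdj t u.2.1 v.2.1) ∨
  (u.2.2 = false ∧ v.2.2 = false ∧ u.2.1 = v.2.1 ∧ cubeAdj s u.1 v.1)

/-- The locally exchanged twisted cube `LeTQ(s,t)`. -/
def LeTQ (s t : ℕ) : SimpleGraph (LeTQVert s t) where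
  Adj u v := u ≠ v ∧ (LeTQAdjOne s t u v ∨ LeTQAdjOne s t v u)
  symm := ⟨fun _ _ h => ⟨h.1.symm, h.2.symm⟩⟩
  loopless := ⟨fun _ h => h.1 rfl⟩

/-- The open neighborhood of a vertex set. -/
def setNbhd {V : Type*} (G : SimpleGraph V) (A : Set V) : Set V :=
  {v | v ∉ A ∧ ∃ u ∈ A, G.Adj u v}

/-!
The vertices of `A` have `c = 0` and, when `s > g`, `a`-bit 0 equal to `0`; at such a vertex the
twisted `a`-adjacency of `LeTQ(s,t)` is plain hypercube adjacency. Hence the neighbours of `A`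
outside `A` are the partners `(a, 0, 1)` of its vertices across `c` and the vertices `(a, 0, 0)`
in which exactly one of the `s - g` low `a`-bits is set: `2 ^ g + (s - g) * 2 ^ g` vertices,
while `|A| = 2 ^ g`.
-/

section bflip

variable {n : ℕ}

@[simp]
lemma bflip_apply_self (x : Fin n → Bool) (k : Fin n) : bflip x k k = !x k := by
  simp [bflip]

lemma bflip_apply_of_ne (x : Fin n → Bool) {k i : Fin n} (h : i ≠ k) : bflip x k i = x i :=
  Function.update_of_ne h _ _

@[simp]
lemma bflip_bflip (x : Fin n → Bool) (k : Fin n) : bflip (bflip x k) k = x := by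
  simp [bflip]

lemma bflip_ne_self (x : Fin n → Bool) (k : Fin n) : bflip x k ≠ x :=
  fun h => by simpa using congrFun h k

end bflip

lemma LTQ.adj_iff_eq_bflip {n : ℕ} {x y : Fin n → Bool} (h0 : 0 < n)
    (hx : x ⟨0, h0⟩ = false) :
    (LTQ n).Adj x y ↔ ∃ k, y = bflip x k := by
  have zero_ne {i : Fin n} (hi : 1 ≤ (i : ℕ)) : (⟨0, h0⟩ : Fin n) ≠ i :=
    fun h => by simp [← h] at hi
  constructor
  · rintro ⟨-, h | h⟩
    · rcases h with ⟨k, -, rfl⟩ | ⟨k, -, ⟨_, hx', -⟩ | ⟨_, -, rfl⟩⟩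
      · exact ⟨k, rfl⟩
      · simp [hx] at hx'
      · exact ⟨k, rfl⟩
    · rcases h with ⟨k, -, rfl⟩ | ⟨k, hk, ⟨_, hy, rfl⟩ | ⟨_, -, rfl⟩⟩
      · exact ⟨k, by simp⟩
      · rw [bflip_apply_of_ne _ (zero_ne (Nat.le_sub_of_add_le hk)),
          bflip_apply_of_ne _ (zero_ne (by omega)), hy] at hx
        simp at hx
      · exact ⟨k, by simp⟩
  · rintro ⟨k, rfl⟩
    refine ⟨(bflip_ne_self x k).symm, Or.inl ?_⟩
    by_cases hk : (k : ℕ) ≤ 1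
    · exact Or.inl ⟨k, hk, rfl⟩
    · exact Or.inr ⟨k, by omega, Or.inr ⟨h0, hx, rfl⟩⟩

lemma LeTQ.adj_iff_of_c_eq_false {s t : ℕ} {u v : LeTQVert s t} (hu : u.2.2 = false) :
    (LeTQ s t).Adj u v ↔
      v = (u.1, u.2.1, true) ∨ (v.2.1 = u.2.1 ∧ v.2.2 = false ∧ (LTQ s).Adj u.1 v.1) := by
  obtain ⟨a, b, c⟩ := u
  obtain ⟨a', b', c'⟩ := v
  subst hu
  simp only [LeTQ, LeTQAdjOne, LTQ, ne_eq, Prod.mk.injEq]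
  cases c' <;> grind

open Finset in
lemma ncard_setOf_forall_imp_eq_false {ι : Type*} [Fintype ι] [DecidableEq ι] (p : ι → Prop)
    [DecidablePred p] :
    {f : ι → Bool | ∀ i, p i → f i = false}.ncard = 2 ^ #{i | ¬p i} := by
  have hpi : {f : ι → Bool | ∀ i, p i → f i = false} =
      ↑(Fintype.piFinset fun i => if p i then {false} else univ) := by
    ext f
    simp only [Set.mem_ofPred_eq, Fintype.coe_piFinset, Set.mem_pi, Set.mem_univ, true_implies]
    refine forall_congr' fun i => ?_
    split_ifs <;> simp [*]
  rw [hpi, Set.ncard_coe_finset]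
  calc (Fintype.piFinset fun i => if p i then {false} else univ).card
      = ∏ i, if ¬p i then 2 else 1 := by
        rw [Fintype.card_piFinset]
        exact prod_congr rfl fun i _ => by split_ifs <;> simp
    _ = 2 ^ #{i | ¬p i} := by rw [← prod_filter, prod_const]

section lowBits

variable {s : ℕ}

def lowZero (s m : ℕ) : Set (Fin s → Bool) := {a | ∀ j : Fin s, (j : ℕ) < m → a j = false}

lemma ncard_lowZero {m : ℕ} (hm : m ≤ s) : (lowZero s m).ncard = 2 ^ (s - m) := by
  rw [lowZero, ncard_setOf_forall_imp_eq_false, Finset.filter_not, Finset.card_sdiff_of_subset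
    (Finset.filter_subset _ _), Fin.card_filter_val_lt, Finset.card_univ, Fintype.card_fin,
    min_eq_right hm]

lemma ncard_setOf_val_lt {m : ℕ} (hm : m ≤ s) : {k : Fin s | (k : ℕ) < m}.ncard = m := by
  rw [Set.ncard_eq_toFinset_card', Set.toFinset_ofPred, Fin.card_filter_val_lt, min_eq_right hm]

lemma bflip_injOn_lowZero (m : ℕ) :
    Set.InjOn (fun p : (Fin s → Bool) × Fin s => bflip p.1 p.2)
      (lowZero s m ×ˢ {k : Fin s | (k : ℕ) < m}) := by
  rintro ⟨a, k⟩ ⟨ha, hk⟩ ⟨a', k'⟩ ⟨ha', hk'⟩ h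
  simp only [Set.mem_ofPred_eq] at ha hk ha' hk' h
  have hkk : k = k' := by
    by_contra hne
    have := congrFun h k
    rw [bflip_apply_self, bflip_apply_of_ne _ hne, ha k hk, ha' k hk] at this
    simp at this
  subst hkk
  simpa using congrArg (bflip · k) h

def LeTQVert.ofA (t : ℕ) (c : Bool) (a : Fin s → Bool) : LeTQVert s t := (a, fun _ => false, c)

lemma LeTQVert.ofA_injective (t : ℕ) (c : Bool) :
    Function.Injective (LeTQVert.ofA (s := s) t c) :=
  fun _ _ h => congrArg Prod.fst h

end lowBits

def lowZeroVerts (s t m : ℕ) : Set (LeTQVert s t) :=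
  {u | (∀ j : Fin s, (j : ℕ) < m → u.1 j = false) ∧
       (∀ j : Fin t, u.2.1 j = false) ∧ u.2.2 = false}

section lowZeroVerts

variable {s t m : ℕ}

lemma ofA_mem_lowZeroVerts_iff {c : Bool} {a : Fin s → Bool} :
    LeTQVert.ofA t c a ∈ lowZeroVerts s t m ↔ a ∈ lowZero s m ∧ c = false := by
  simp [LeTQVert.ofA, lowZeroVerts, lowZero]

lemma LeTQVert.eq_ofA {v : LeTQVert s t} (hb : ∀ j, v.2.1 j = false) :
    v = LeTQVert.ofA t v.2.2 v.1 := by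
  rw [LeTQVert.ofA, ← funext hb]

lemma lowZeroVerts_eq_image : lowZeroVerts s t m = LeTQVert.ofA t false '' lowZero s m := by
  ext v
  constructor
  · rintro ⟨ha, hb, hc⟩
    exact ⟨v.1, ha, by rw [← hc, ← LeTQVert.eq_ofA hb]⟩
  · rintro ⟨a, ha, rfl⟩
    exact ofA_mem_lowZeroVerts_iff.2 ⟨ha, rfl⟩

lemma disjoint_image_ofA_true_false (X Y : Set (Fin s → Bool)) :
    Disjoint (LeTQVert.ofA t true '' X) (LeTQVert.ofA t false '' Y) :=
  Set.disjoint_left.2 fun _ ⟨_, _, hx⟩ ⟨_, _, hy⟩ => by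
    simpa [LeTQVert.ofA] using congrArg (·.2.2) (hx.trans hy.symm)

theorem setNbhd_lowZeroVerts :
    setNbhd (LeTQ s t) (lowZeroVerts s t m) =
      LeTQVert.ofA t true '' lowZero s m ∪ LeTQVert.ofA t false ''
        ((fun p => bflip p.1 p.2) '' (lowZero s m ×ˢ {k : Fin s | (k : ℕ) < m})) := by
  ext v
  constructor
  · rintro ⟨hvA, u, ⟨hu1, hu2, hu3⟩, hadj⟩
    rcases (LeTQ.adj_iff_of_c_eq_false hu3).1 hadj with rfl | ⟨hvb, hvc, hadj⟩
    · exact Or.inl ⟨u.1, hu1, by rw [LeTQVert.ofA, ← funext hu2]⟩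
    have hv : v = LeTQVert.ofA t false v.1 := by
      rw [← hvc]; exact LeTQVert.eq_ofA (hvb ▸ hu2)
    rw [hv, ofA_mem_lowZeroVerts_iff] at hvA
    obtain rfl | hm := Nat.eq_zero_or_pos m
    · exact absurd ⟨fun _ h => absurd h (Nat.not_lt_zero _), rfl⟩ hvA
    have hs : 0 < s := Nat.pos_of_ne_zero <| by
      rintro rfl
      exact hadj.ne (Subsingleton.elim _ _)
    obtain ⟨k, hk⟩ := (LTQ.adj_iff_eq_bflip hs (hu1 _ hm)).1 hadj
    by_cases hkm : (k : ℕ) < m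
    · exact Or.inr ⟨v.1, ⟨(u.1, k), ⟨hu1, hkm⟩, hk.symm⟩, hv.symm⟩
    · refine absurd ⟨fun j hj => ?_, rfl⟩ hvA
      rw [hk, bflip_apply_of_ne _ (by rintro rfl; exact hkm hj)]
      exact hu1 j hj
  · rintro (⟨a, ha, rfl⟩ |
      ⟨_, ⟨⟨a, k⟩, ⟨ha : a ∈ lowZero s m, hk : (k : ℕ) < m⟩, rfl⟩, rfl⟩)
    · refine ⟨by simp [ofA_mem_lowZeroVerts_iff], LeTQVert.ofA t false a,
        ofA_mem_lowZeroVerts_iff.2 ⟨ha, rfl⟩, (LeTQ.adj_iff_of_c_eq_false rfl).2 (Or.inl rfl)⟩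
    · refine ⟨fun h => ?_, LeTQVert.ofA t false a, ofA_mem_lowZeroVerts_iff.2 ⟨ha, rfl⟩,
        (LeTQ.adj_iff_of_c_eq_false rfl).2 (Or.inr ⟨rfl, rfl, ?_⟩)⟩
      · simpa [ha k hk] using (ofA_mem_lowZeroVerts_iff.1 h).1 k hk
      · exact (LTQ.adj_iff_eq_bflip k.pos (ha _ (Nat.zero_lt_of_lt hk))).2 ⟨k, rfl⟩

lemma ncard_lowZeroVerts (hm : m ≤ s) : (lowZeroVerts s t m).ncard = 2 ^ (s - m) := by
  rw [lowZeroVerts_eq_image, Set.ncard_image_of_injective _ (LeTQVert.ofA_injective t false),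
    ncard_lowZero hm]

lemma ncard_setNbhd_lowZeroVerts (hm : m ≤ s) :
    (setNbhd (LeTQ s t) (lowZeroVerts s t m)).ncard = 2 ^ (s - m) * (m + 1) := by
  rw [setNbhd_lowZeroVerts, Set.ncard_union_eq (disjoint_image_ofA_true_false _ _),
    Set.ncard_image_of_injective _ (LeTQVert.ofA_injective t true),
    Set.ncard_image_of_injective _ (LeTQVert.ofA_injective t false),
    (bflip_injOn_lowZero m).ncard_image, Set.ncard_prod, ncard_lowZero hm,
    ncard_setOf_val_lt hm]
  ring

end lowZeroVerts

theorem stmt9_general (s t g : ℕ) (hg : g ≤ s) :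
    let A : Set (LeTQVert s t) :=
      {u | (∀ j : Fin s, (j : ℕ) < s - g → u.1 j = false) ∧
           (∀ j : Fin t, u.2.1 j = false) ∧ u.2.2 = false}
    (setNbhd (LeTQ s t) A).ncard = 2 ^ g * (s - g + 1) ∧
    (setNbhd (LeTQ s t) A ∪ A).ncard = 2 ^ g * (s - g + 2) := by
  intro A
  have hA : A = lowZeroVerts s t (s - g) := rfl
  have hm : s - g ≤ s := Nat.sub_le s g
  have hsg : s - (s - g) = g := Nat.sub_sub_self hg
  have hN := ncard_setNbhd_lowZeroVerts (t := t) hm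
  have hdisj : Disjoint (setNbhd (LeTQ s t) A) A := Set.disjoint_left.2 fun _ hv => hv.1
  rw [hsg, ← hA] at hN
  refine ⟨hN, ?_⟩
  rw [Set.ncard_union_eq hdisj, hN, hA, ncard_lowZeroVerts hm, hsg]
  ring

/-- Cardinalities of the open and closed neighborhoods of the set A. -/
theorem stmt9 (s t g : ℕ) (hs : 1 ≤ s) (hst : s ≤ t) (hg : g ≤ s) :
    let A : Set (LeTQVert s t) :=
      {u | (∀ j : Fin s, (j : ℕ) < s - g → u.1 j = false) ∧
           (∀ j : Fin t, u.2.1 j = false) ∧ u.2.2 = false}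
    (setNbhd (LeTQ s t) A).ncard = 2 ^ g * (s - g + 1) ∧
    (setNbhd (LeTQ s t) A ∪ A).ncard = 2 ^ g * (s - g + 2) :=
  stmt9_general s t g hg
end

section
/- For 1 <= s <= t and 0 <= g <= s, the R^g-vertex-connectivity of LeTQ(s,t) equals 2^g(s-g+1). -/
/-!
`LeTQ(s,t)` is made of `2^t` copies of `LTQ_s` (the rows, `c = 0`) and `2^s` copies of `LTQ_t`
(the columns, `c = 1`), and every vertex has exactly one neighbour outside its copy; likewise
`LTQ_{n+1}` is two copies of `LTQ_n` joined by a perfect matching.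

Upper bound: in row `0`, the strings supported on the first `g` bits form a copy `A` of `LTQ_g`;
its open neighbourhood consists of `2^g` vertices in layer `1` and `2^g (s - g)` vertices of row
`0`, and it is an `R^g`-vertex-cut isolating `A`.

Lower bound: splitting `LTQ_n` along its last bit gives by induction that a vertex set of
minimum degree `g` has at least `2^g` vertices and a closed neighbourhood of at least
`2^g (n - g + 1)` vertices, and that an `R^g`-cut of `LTQ_n` has at least `2^g (n - g)` vertices.
In `LeTQ(s,t)`, if a side of the cut lies in one layer, the closed neighbourhood of its trace on
one row (column) injects into the cut. Otherwise either some row and some column both meet both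
sides, and the cut contains `2^(g-1) (s - g + 1) + 2^(g-1) (t - g + 1)` vertices of them, or
every row (every column) meets the cut, which then has at least `2^t` (`2^s`) vertices.
-/

lemma Set.ncard_preimage_eq_ncard_inter_range {α β : Type*} {f : α → β}
    (hf : Function.Injective f) (S : Set β) : (f ⁻¹' S).ncard = (S ∩ Set.range f).ncard := by
  rw [← Set.preimage_inter_range,
    Set.ncard_preimage_of_injective_subset_range hf Set.inter_subset_right]

lemma Set.SurjOn.card_le_ncard {α β : Type*} [Finite α] {π : α → β} {S : Set α}
    (h : Set.SurjOn π S Set.univ) : Nat.card β ≤ S.ncard :=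
  calc Nat.card β = (Set.univ : Set β).ncard := (Set.ncard_univ β).symm
    _ ≤ (π '' S).ncard := Set.ncard_le_ncard h ((Set.toFinite S).image π)
    _ ≤ S.ncard := Set.ncard_image_le

lemma Fin.ncard_setOf_val_lt {n g : ℕ} (hg : g ≤ n) : {k : Fin n | (k : ℕ) < g}.ncard = g := by
  have : {k : Fin n | (k : ℕ) < g} = Set.range (Fin.castLE hg) := by
    ext k
    exact ⟨fun hk => ⟨⟨k, hk⟩, rfl⟩, by rintro ⟨i, rfl⟩; exact i.isLt⟩
  rw [this, Set.ncard_range_of_injective (Fin.castLE_injective hg), Nat.card_eq_fintype_card,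
    Fintype.card_fin]

namespace SimpleGraph

variable {V W : Type*} {G : SimpleGraph V} {H : SimpleGraph W}

def closedNbhd (G : SimpleGraph V) (D : Set V) : Set V :=
  {w | w ∈ D ∨ ∃ v ∈ D, G.Adj v w}

lemma subset_closedNbhd (D : Set V) : D ⊆ G.closedNbhd D := fun _ h => Or.inl h

lemma mem_closedNbhd_of_adj {D : Set V} {v w : V} (hv : v ∈ D) (h : G.Adj v w) :
    w ∈ G.closedNbhd D :=
  Or.inr ⟨v, hv, h⟩

/-- `(C ∪ D)ᶜ` is an `R^g`-vertex-cut separating `C` from `D`. -/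
structure IsRSeparation (G : SimpleGraph V) (g : ℕ) (C D : Set V) : Prop where
  disjoint : Disjoint C D
  not_adj : ∀ u ∈ C, ∀ v ∈ D, ¬ G.Adj u v
  le_degree_left : ∀ v ∈ C, g ≤ (G.neighborSet v ∩ C).ncard
  le_degree_right : ∀ v ∈ D, g ≤ (G.neighborSet v ∩ D).ncard

namespace IsRSeparation

variable {g : ℕ} {C D : Set V}

lemma symm (h : G.IsRSeparation g C D) : G.IsRSeparation g D C where
  disjoint := h.disjoint.symm
  not_adj u hu v hv huv := h.not_adj v hv u hu huv.symm
  le_degree_left := h.le_degree_right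
  le_degree_right := h.le_degree_left

lemma closedNbhd_diff_subset (h : G.IsRSeparation g C D) :
    G.closedNbhd D \ D ⊆ (C ∪ D)ᶜ := by
  rintro w ⟨hw | ⟨v, hv, hvw⟩, hwD⟩
  · exact absurd hw hwD
  · rintro (hwC | hwD')
    · exact h.not_adj w hwC v hv hvw.symm
    · exact hwD hwD'

lemma mem_right_of_adj (h : G.IsRSeparation g C D) {v w : V} (hv : v ∈ D) (hvw : G.Adj v w)
    (hw : w ∈ C ∪ D) : w ∈ D :=
  hw.resolve_left fun hwC => h.not_adj w hwC v hv hvw.symm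

lemma notMem_or_notMem_of_adj (h : G.IsRSeparation g C D) {p q p' q' : V}
    (hpq : G.Adj p q) (hpq' : G.Adj p' q') (hp : p ∉ C) (hp' : p' ∉ D)
    (hq : q ∈ D → q' ∉ C) :
    p ∉ C ∪ D ∨ q ∉ C ∪ D ∨ p' ∉ C ∪ D ∨ q' ∉ C ∪ D := by
  by_contra! ⟨h₁, h₂, h₃, h₄⟩
  have hpD : p ∈ D := h₁.resolve_left hp
  have hp'C : p' ∈ C := h₃.resolve_right hp'
  exact hq (h.mem_right_of_adj hpD hpq h₂)
    (h.symm.mem_right_of_adj hp'C hpq' (Set.union_comm C D ▸ h₄))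

end IsRSeparation

theorem exists_isRSeparation [Finite V] {g : ℕ} {F : Set V}
    (hdeg : ∀ v ∉ F, g ≤ (G.neighborSet v \ F).ncard) (hconn : ¬ (G.induce Fᶜ).Preconnected) :
    ∃ C D, C.Nonempty ∧ D.Nonempty ∧ G.IsRSeparation g C D ∧ (C ∪ D)ᶜ = F := by
  obtain ⟨u, w, huw⟩ : ∃ u w : ↥Fᶜ, ¬ (G.induce Fᶜ).Reachable u w := by
    simpa [Preconnected] using hconn
  set C : Set V := {v | ∃ hv : v ∈ Fᶜ, (G.induce Fᶜ).Reachable u ⟨v, hv⟩}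
  have hCF : C ⊆ Fᶜ := fun v hv => hv.1
  have hCclosed {v v'} (hv : v ∈ C) (hv' : v' ∈ Fᶜ) (h : G.Adj v v') : v' ∈ C :=
    ⟨hv', hv.2.trans (Adj.reachable (G := G.induce Fᶜ) (u := ⟨v, hv.1⟩) h)⟩
  have hsep : G.IsRSeparation g C (Fᶜ \ C) :=
    { disjoint := Set.disjoint_sdiff_right
      not_adj := fun v hv v' hv' h => hv'.2 (hCclosed hv hv'.1 h)
      le_degree_left := fun v hv => (hdeg v (hCF hv)).trans <| Set.ncard_le_ncard
        fun v' hv' => ⟨hv'.1, hCclosed hv hv'.2 hv'.1⟩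
      le_degree_right := fun v hv => (hdeg v hv.1).trans <| Set.ncard_le_ncard
        fun v' hv' => ⟨hv'.1, hv'.2, fun hv'C => hv.2 (hCclosed hv'C hv.1 hv'.1.symm)⟩ }
  refine ⟨C, Fᶜ \ C, ⟨u, u.2, .refl _⟩, ⟨w, w.2, fun hw => huw hw.2⟩, hsep, ?_⟩
  rw [Set.union_sdiff_cancel hCF, compl_compl]

theorem not_preconnected_induce_compl {A F : Set V} (hAF : Disjoint A F) (hA : A.Nonempty)
    (hclosed : ∀ v ∈ A, ∀ w, G.Adj v w → w ∈ A ∪ F) (hw : ¬ A ∪ F = Set.univ) :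
    ¬ (G.induce Fᶜ).Preconnected := by
  obtain ⟨u, hu⟩ := hA
  obtain ⟨w, hw⟩ := (Set.ne_univ_iff_exists_notMem _).1 hw
  have hreach {x y : ↥Fᶜ} (p : (G.induce Fᶜ).Walk x y) : x.1 ∈ A → y.1 ∈ A := by
    induction p with
    | nil => exact id
    | @cons _ y _ h _ ih => exact fun hx => ih ((hclosed _ hx _ h).resolve_right y.2)
  intro hpre
  obtain ⟨p⟩ := hpre ⟨u, Set.disjoint_left.1 hAF hu⟩ ⟨w, fun h => hw (Or.inr h)⟩
  exact hw (Or.inl (hreach p hu))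

lemma closedNbhd_preimage_subset (f : G ↪g H) (U : Set W) :
    G.closedNbhd (f ⁻¹' U) ⊆ f ⁻¹' H.closedNbhd U := by
  rintro x (hx | ⟨y, hy, hyx⟩)
  · exact Or.inl hx
  · exact mem_closedNbhd_of_adj hy (f.map_adj_iff.2 hyx)

/-- The edges leaving the copy `f` of `G` inside `H` form a matching `f x ~ σ x`. -/
structure Embedding.IsExitMatching (f : G ↪g H) (σ : V → W) : Prop where
  adj : ∀ x, H.Adj (f x) (σ x)
  notMem_range : ∀ x, σ x ∉ Set.range f
  eq_of_adj : ∀ x w, H.Adj (f x) w → w ∉ Set.range f → w = σ x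
  injective : Function.Injective σ

namespace Embedding.IsExitMatching

variable {f : G ↪g H} {σ : V → W}

lemma neighborSet_inter_subset (hf : f.IsExitMatching σ) (x : V) (U : Set W) :
    H.neighborSet (f x) ∩ U ⊆ insert (σ x) (f '' (G.neighborSet x ∩ f ⁻¹' U)) := by
  rintro w ⟨hxw, hwU⟩
  by_cases hw : w ∈ Set.range f
  · obtain ⟨y, rfl⟩ := hw
    exact Or.inr ⟨y, ⟨f.map_adj_iff.1 hxw, hwU⟩, rfl⟩
  · exact Or.inl (hf.eq_of_adj x w hxw hw)

variable [Finite W]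

lemma ncard_neighborSet_inter_le (hf : f.IsExitMatching σ) {x : V} {U : Set W}
    (hx : σ x ∉ U) :
    (H.neighborSet (f x) ∩ U).ncard ≤ (G.neighborSet x ∩ f ⁻¹' U).ncard := by
  have hsub := hf.neighborSet_inter_subset x U
  rw [Set.subset_insert_iff_of_notMem fun h => hx h.2] at hsub
  exact (Set.ncard_le_ncard hsub).trans_eq (Set.ncard_image_of_injective _ f.injective)

lemma sub_one_le_ncard_neighborSet_inter (hf : f.IsExitMatching σ) {x : V} {U : Set W}
    {g : ℕ} (h : g ≤ (H.neighborSet (f x) ∩ U).ncard) :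
    g - 1 ≤ (G.neighborSet x ∩ f ⁻¹' U).ncard := by
  have := h.trans <| (Set.ncard_le_ncard (hf.neighborSet_inter_subset x U)).trans <|
    Set.ncard_insert_le _ _
  rwa [Set.ncard_image_of_injective _ f.injective, ← Nat.sub_le_iff_le_add] at this

lemma isRSeparation_comap (hf : f.IsExitMatching σ) {g : ℕ} {C D : Set W}
    (h : H.IsRSeparation g C D) : G.IsRSeparation (g - 1) (f ⁻¹' C) (f ⁻¹' D) where
  disjoint := h.disjoint.preimage f
  not_adj _ hu _ hv huv := h.not_adj _ hu _ hv (f.map_adj_iff.2 huv)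
  le_degree_left _ hv := hf.sub_one_le_ncard_neighborSet_inter (h.le_degree_left _ hv)
  le_degree_right _ hv := hf.sub_one_le_ncard_neighborSet_inter (h.le_degree_right _ hv)

/-- `f` maps `closedNbhd (f ⁻¹' U) \ f ⁻¹' U`, and `σ` maps `f ⁻¹' U`, into the open
neighbourhood of `U`, with disjoint images. -/
lemma ncard_closedNbhd_preimage_le [Finite V] (hf : f.IsExitMatching σ) {U : Set W}
    (hσU : ∀ x ∈ f ⁻¹' U, σ x ∉ U) :
    (G.closedNbhd (f ⁻¹' U)).ncard ≤ (H.closedNbhd U \ U).ncard := by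
  set E := f ⁻¹' U
  have hdisj : Disjoint (f '' (G.closedNbhd E \ E)) (σ '' E) := by
    rw [Set.disjoint_left]
    rintro _ ⟨x, -, rfl⟩ ⟨y, -, hy⟩
    exact hf.notMem_range y ⟨x, hy.symm⟩
  have hsub : f '' (G.closedNbhd E \ E) ∪ σ '' E ⊆ H.closedNbhd U \ U := by
    rintro _ (⟨x, ⟨hx | ⟨y, hy, hyx⟩, hxE⟩, rfl⟩ | ⟨x, hx, rfl⟩)
    · exact absurd hx hxE
    · exact ⟨mem_closedNbhd_of_adj hy (f.map_adj_iff.2 hyx), hxE⟩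
    · exact ⟨mem_closedNbhd_of_adj hx (hf.adj x), hσU x hx⟩
  calc (G.closedNbhd E).ncard = (G.closedNbhd E \ E).ncard + E.ncard :=
        (Set.ncard_sdiff_add_ncard_of_subset (subset_closedNbhd E)).symm
    _ = (f '' (G.closedNbhd E \ E) ∪ σ '' E).ncard := by
        rw [Set.ncard_union_eq hdisj, Set.ncard_image_of_injective _ f.injective,
          Set.ncard_image_of_injective _ hf.injective]
    _ ≤ (H.closedNbhd U \ U).ncard := Set.ncard_le_ncard hsub

end Embedding.IsExitMatching

end SimpleGraph

namespace LTQ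

variable {n : ℕ}

def move (x : Fin n → Bool) (k : Fin n) : Fin n → Bool := fun j =>
  if j = k ∨ (2 ≤ (k : ℕ) ∧ x ⟨0, k.pos⟩ = true ∧ (j : ℕ) + 1 = k) then !x j else x j

lemma move_self (x : Fin n → Bool) (k : Fin n) : move x k k = !x k := by
  simp [move]

lemma move_of_lt (x : Fin n → Bool) {k j : Fin n} (h : (k : ℕ) < j) : move x k j = x j := by
  simp only [move]
  rw [if_neg]
  rintro (rfl | ⟨-, -, hj⟩) <;> omega

lemma move_zero (x : Fin n → Bool) {k : Fin n} (hk : 1 ≤ (k : ℕ)) (h0 : 0 < n) :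
    move x k ⟨0, h0⟩ = x ⟨0, h0⟩ := by
  simp only [move]
  rw [if_neg]
  rintro (h | ⟨h2, -, h⟩) <;> simp [Fin.ext_iff] at h <;> omega

lemma move_move (x : Fin n → Bool) (k : Fin n) : move (move x k) k = x := by
  funext j
  have hcond : (2 ≤ (k : ℕ) ∧ move x k ⟨0, k.pos⟩ = true ∧ (j : ℕ) + 1 = k) ↔
      (2 ≤ (k : ℕ) ∧ x ⟨0, k.pos⟩ = true ∧ (j : ℕ) + 1 = k) :=
    and_congr_right fun hk => by rw [move_zero x (by omega)]
  rw [move, if_congr (or_congr_right hcond) rfl rfl, move]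
  split_ifs <;> simp

lemma move_comm (x : Fin n → Bool) {k k' : Fin n} (hk : 1 ≤ (k : ℕ)) (hk' : 1 ≤ (k' : ℕ)) :
    move (move x k) k' = move (move x k') k := by
  funext j
  rw [move, move_zero x hk]
  conv_rhs => rw [move, move_zero x hk']
  simp only [move]
  split_ifs <;> simp

lemma move_ne (x : Fin n → Bool) (k : Fin n) : move x k ≠ x := fun h => by
  simpa [move_self] using congrFun h k

lemma move_injective (x : Fin n → Bool) : Function.Injective (move x) := by
  suffices ∀ k k' : Fin n, (k : ℕ) < k' → move x k ≠ move x k' by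
    intro k k' h
    rcases lt_trichotomy (k : ℕ) k' with hlt | heq | hgt
    · exact absurd h (this k k' hlt)
    · exact Fin.ext heq
    · exact absurd h.symm (this k' k hgt)
  intro k k' hlt h
  simpa [move_of_lt x hlt, move_self] using congrFun h k'

lemma move_eq_bflip (x : Fin n → Bool) {k : Fin n} (hk : (k : ℕ) ≤ 1 ∨ x ⟨0, k.pos⟩ = false) :
    move x k = bflip x k := by
  funext j
  simp only [move, bflip, Function.update_apply]
  split_ifs <;> simp_all; omega

lemma move_eq_bflip_bflip (x : Fin n → Bool) {k : Fin n} (hk : 2 ≤ (k : ℕ))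
    (h0 : x ⟨0, k.pos⟩ = true) :
    move x k = bflip (bflip x k) ⟨(k : ℕ) - 1, lt_of_le_of_lt (Nat.sub_le _ _) k.isLt⟩ := by
  funext j
  have hk1 : (⟨(k : ℕ) - 1, lt_of_le_of_lt (Nat.sub_le _ _) k.isLt⟩ : Fin n) ≠ k := by
    simp [Fin.ext_iff]; omega
  simp only [move, bflip, Function.update_apply, h0, hk, true_and]
  by_cases hjk : j = k
  · subst hjk; simp [hk1.symm]
  by_cases hj : (j : ℕ) + 1 = k
  · obtain rfl : j = ⟨(k : ℕ) - 1, lt_of_le_of_lt (Nat.sub_le _ _) k.isLt⟩ := by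
      ext; simp; omega
    simp [hk1]; omega
  · rw [if_neg (by tauto), if_neg (by simp [Fin.ext_iff]; omega), if_neg hjk]

lemma cubeAdj_iff {x y : Fin n → Bool} : cubeAdj n x y ↔ ∃ k, y = move x k := by
  constructor
  · rintro (⟨k, hk, rfl⟩ | ⟨k, hk, ⟨h0, hx, rfl⟩ | ⟨h0, hx, rfl⟩⟩)
    · exact ⟨k, (move_eq_bflip x (Or.inl hk)).symm⟩
    · exact ⟨k, (move_eq_bflip_bflip x hk hx).symm⟩
    · exact ⟨k, (move_eq_bflip x (Or.inr hx)).symm⟩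
  · rintro ⟨k, rfl⟩
    by_cases hk : (k : ℕ) ≤ 1
    · exact Or.inl ⟨k, hk, move_eq_bflip x (Or.inl hk)⟩
    · cases hx : x ⟨0, k.pos⟩
      · exact Or.inr ⟨k, by omega, Or.inr ⟨k.pos, hx, move_eq_bflip x (Or.inr hx)⟩⟩
      · exact Or.inr ⟨k, by omega, Or.inl ⟨k.pos, hx, move_eq_bflip_bflip x (by omega) hx⟩⟩

lemma adj_iff {x y : Fin n → Bool} : (LTQ n).Adj x y ↔ ∃ k, y = move x k := by
  constructor
  · rintro ⟨-, h | h⟩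
    · exact cubeAdj_iff.1 h
    · obtain ⟨k, rfl⟩ := cubeAdj_iff.1 h
      exact ⟨k, (move_move y k).symm⟩
  · rintro ⟨k, rfl⟩
    exact ⟨(move_ne x k).symm, Or.inl (cubeAdj_iff.2 ⟨k, rfl⟩)⟩

lemma adj_move (x : Fin n → Bool) (k : Fin n) : (LTQ n).Adj x (move x k) := adj_iff.2 ⟨k, rfl⟩

lemma neighborSet_zero (v : Fin 0 → Bool) : (LTQ 0).neighborSet v = ∅ :=
  Set.eq_empty_of_forall_notMem fun w (h : (LTQ 0).Adj v w) => h.ne (Subsingleton.elim v w)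

end LTQ

namespace SimpleGraph.Embedding

variable {W : Type*} [Finite W] {H : SimpleGraph W} {n : ℕ}

lemma ncard_le_ncard_neighborSet_diff (f : LTQ n ↪g H) (x : Fin n → Bool) {F : Set W}
    {K : Set (Fin n)} (hK : ∀ k ∈ K, f (LTQ.move x k) ∉ F) :
    K.ncard ≤ (H.neighborSet (f x) \ F).ncard :=
  Set.ncard_le_ncard_of_injOn (fun k => f (LTQ.move x k))
    (fun k hk => ⟨f.map_adj_iff.2 (LTQ.adj_move x k), hK k hk⟩)
    (fun _ _ _ _ h => LTQ.move_injective x (f.injective h))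

lemma IsExitMatching.ncard_add_one_le_ncard_neighborSet_diff {f : LTQ n ↪g H}
    {σ : (Fin n → Bool) → W} (hf : f.IsExitMatching σ) (x : Fin n → Bool) {F : Set W}
    {K : Set (Fin n)} (hK : ∀ k ∈ K, f (LTQ.move x k) ∉ F) (hσ : σ x ∉ F) :
    K.ncard + 1 ≤ (H.neighborSet (f x) \ F).ncard := by
  have hσK : σ x ∉ (fun k => f (LTQ.move x k)) '' K := by
    rintro ⟨k, -, hk⟩
    exact hf.notMem_range x ⟨_, hk⟩
  have hsub : insert (σ x) ((fun k => f (LTQ.move x k)) '' K) ⊆ H.neighborSet (f x) \ F := by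
    rintro _ (rfl | ⟨k, hk, rfl⟩)
    · exact ⟨hf.adj x, hσ⟩
    · exact ⟨f.map_adj_iff.2 (LTQ.adj_move x k), hK k hk⟩
  calc K.ncard + 1 = (insert (σ x) ((fun k => f (LTQ.move x k)) '' K)).ncard := by
        rw [Set.ncard_insert_of_notMem hσK, Set.ncard_image_of_injective _
          fun _ _ h => LTQ.move_injective x (f.injective h)]
    _ ≤ _ := Set.ncard_le_ncard hsub

end SimpleGraph.Embedding

namespace LTQ

variable {n : ℕ}

lemma move_snoc_castSucc (x : Fin n → Bool) (b : Bool) (k : Fin n) :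
    move (Fin.snoc x b : Fin (n + 1) → Bool) k.castSucc = Fin.snoc (move x k) b := by
  funext j
  refine Fin.lastCases ?_ (fun j => ?_) j
  · rw [move_of_lt _ (by simp), Fin.snoc_last, Fin.snoc_last]
  · have h0 : (Fin.snoc x b : Fin (n + 1) → Bool) ⟨0, k.castSucc.pos⟩ = x ⟨0, k.pos⟩ :=
      Fin.snoc_castSucc (i := ⟨0, k.pos⟩) ..
    simp only [move, h0, Fin.snoc_castSucc, Fin.castSucc_inj, Fin.val_castSucc]

lemma move_last_last (v : Fin (n + 1) → Bool) :
    move v (Fin.last n) (Fin.last n) = !v (Fin.last n) :=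
  move_self v _

def snocEmbedding (n : ℕ) (b : Bool) : LTQ n ↪g LTQ (n + 1) where
  toFun x := Fin.snoc x b
  inj' _ _ h := (Fin.snoc_injective2 h).1
  map_rel_iff' {x y} := by
    change (LTQ (n + 1)).Adj (Fin.snoc x b) (Fin.snoc y b) ↔ _
    simp only [adj_iff]
    constructor
    · rintro ⟨k, hk⟩
      refine Fin.lastCases (fun hk => ?_) (fun k hk => ⟨k, ?_⟩) k hk
      · have := congrFun hk (Fin.last n)
        simp [move_last_last] at this
      · rw [move_snoc_castSucc] at hk
        exact (Fin.snoc_injective2 hk).1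
    · rintro ⟨k, rfl⟩
      exact ⟨k.castSucc, (move_snoc_castSucc x b k).symm⟩

@[simp] lemma snocEmbedding_apply (b : Bool) (x : Fin n → Bool) :
    snocEmbedding n b x = Fin.snoc x b := rfl

lemma mem_range_snocEmbedding {b : Bool} {v : Fin (n + 1) → Bool} :
    v ∈ Set.range (snocEmbedding n b) ↔ v (Fin.last n) = b := by
  constructor
  · rintro ⟨x, rfl⟩
    simp
  · intro h
    exact ⟨Fin.init v, by rw [snocEmbedding_apply, ← h, Fin.snoc_init_self]⟩

lemma isExitMatching_snocEmbedding (b : Bool) :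
    (snocEmbedding n b).IsExitMatching (fun x => move (Fin.snoc x b) (Fin.last n)) where
  adj x := adj_move _ _
  notMem_range x := by
    rw [mem_range_snocEmbedding, move_last_last, Fin.snoc_last]
    simp
  eq_of_adj x w hxw hw := by
    obtain ⟨k, rfl⟩ := adj_iff.1 hxw
    refine Fin.lastCases (fun _ => rfl) (fun k hw => ?_) k hw
    exact absurd ⟨move x k, (move_snoc_castSucc x b k).symm⟩ hw
  injective x y h := by
    have := congrArg (move · (Fin.last n)) h
    simpa [move_move] using this

lemma ncard_eq_ncard_preimage_add (S : Set (Fin (n + 1) → Bool)) :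
    S.ncard = (snocEmbedding n false ⁻¹' S).ncard + (snocEmbedding n true ⁻¹' S).ncard := by
  have hdisj : Disjoint (S ∩ Set.range (snocEmbedding n false))
      (S ∩ Set.range (snocEmbedding n true)) := by
    rw [Set.disjoint_left]
    rintro v ⟨-, h0⟩ ⟨-, h1⟩
    rw [mem_range_snocEmbedding] at h0 h1
    simp [h0] at h1
  have hS : S = S ∩ Set.range (snocEmbedding n false) ∪ S ∩ Set.range (snocEmbedding n true) := by
    ext v
    simp only [Set.mem_union, Set.mem_inter_iff, mem_range_snocEmbedding]
    cases v (Fin.last n) <;> simp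
  rw [Set.ncard_preimage_eq_ncard_inter_range (snocEmbedding n false).injective,
    Set.ncard_preimage_eq_ncard_inter_range (snocEmbedding n true).injective,
    ← Set.ncard_union_eq hdisj, ← hS]

lemma preimage_snocEmbedding_nonempty {D : Set (Fin (n + 1) → Bool)}
    (hD : ∀ b, ¬ D ⊆ Set.range (snocEmbedding n b)) (b : Bool) :
    (snocEmbedding n b ⁻¹' D).Nonempty := by
  obtain ⟨v, hvD, hv⟩ := Set.not_subset.1 (hD !b)
  rw [mem_range_snocEmbedding] at hv
  refine ⟨Fin.init v, ?_⟩
  rwa [Set.mem_preimage, snocEmbedding_apply, show b = v (Fin.last n) by cases b <;> simp_all,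
    Fin.snoc_init_self]

open SimpleGraph

theorem two_pow_le_ncard {g : ℕ} {D : Set (Fin n → Bool)} (hD : D.Nonempty)
    (hdeg : ∀ v ∈ D, g ≤ ((LTQ n).neighborSet v ∩ D).ncard) : 2 ^ g ≤ D.ncard := by
  induction n generalizing g with
  | zero =>
    obtain ⟨v, hv⟩ := hD
    have hg := hdeg v hv
    rw [neighborSet_zero, Set.empty_inter, Set.ncard_empty, Nat.le_zero] at hg
    simpa [hg] using Nat.succ_le_of_lt ((Set.ncard_pos).2 ⟨v, hv⟩)
  | succ n ih =>
    by_cases hhalf : ∃ b, D ⊆ Set.range (snocEmbedding n b)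
    · obtain ⟨b, hb⟩ := hhalf
      have hf := isExitMatching_snocEmbedding (n := n) b
      rw [← Set.ncard_preimage_of_injective_subset_range (snocEmbedding n b).injective hb]
      refine ih (hD.preimage' hb) fun x hx => (hdeg _ hx).trans
        (hf.ncard_neighborSet_inter_le fun h => hf.notMem_range x (hb h))
    · push Not at hhalf
      have hhalves (b : Bool) : 2 ^ (g - 1) ≤ (snocEmbedding n b ⁻¹' D).ncard :=
        ih (preimage_snocEmbedding_nonempty hhalf b) fun x hx =>
          (isExitMatching_snocEmbedding b).sub_one_le_ncard_neighborSet_inter (hdeg _ hx)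
      have hpow : 2 ^ g ≤ 2 ^ (g - 1) + 2 ^ (g - 1) := by
        rcases g with _ | g <;> simp [pow_succ]; omega
      rw [ncard_eq_ncard_preimage_add]
      linarith [hhalves false, hhalves true]

theorem two_pow_mul_le_ncard_closedNbhd {g : ℕ} {D : Set (Fin n → Bool)} (hD : D.Nonempty)
    (hdeg : ∀ v ∈ D, g ≤ ((LTQ n).neighborSet v ∩ D).ncard) :
    2 ^ g * (n - g + 1) ≤ ((LTQ n).closedNbhd D).ncard := by
  induction n generalizing g with
  | zero =>
    simpa using (two_pow_le_ncard hD hdeg).trans (Set.ncard_le_ncard (subset_closedNbhd D))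
  | succ n ih =>
    by_cases hhalf : ∃ b, D ⊆ Set.range (snocEmbedding n b)
    · obtain ⟨b, hb⟩ := hhalf
      have hf := isExitMatching_snocEmbedding (n := n) b
      have hσD (x) (_ : x ∈ snocEmbedding n b ⁻¹' D) : move (Fin.snoc x b) (Fin.last n) ∉ D :=
        fun h => hf.notMem_range x (hb h)
      have hnbhd := (ih (hD.preimage' hb) fun x hx => (hdeg _ hx).trans
        (hf.ncard_neighborSet_inter_le (hσD x hx))).trans (hf.ncard_closedNbhd_preimage_le hσD)
      have hsize := two_pow_le_ncard hD hdeg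
      rw [← Set.ncard_sdiff_add_ncard_of_subset (subset_closedNbhd D)]
      calc 2 ^ g * (n + 1 - g + 1) ≤ 2 ^ g * (n - g + 1) + 2 ^ g := by
            rw [← Nat.mul_succ]; exact Nat.mul_le_mul_left _ (by omega)
        _ ≤ _ := Nat.add_le_add hnbhd hsize
    · push Not at hhalf
      have hhalves (b : Bool) : 2 ^ (g - 1) * (n - (g - 1) + 1) ≤
          (snocEmbedding n b ⁻¹' (LTQ (n + 1)).closedNbhd D).ncard :=
        (ih (preimage_snocEmbedding_nonempty hhalf b) fun x hx =>
          (isExitMatching_snocEmbedding b).sub_one_le_ncard_neighborSet_inter (hdeg _ hx)).trans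
          (Set.ncard_le_ncard (closedNbhd_preimage_subset _ D))
      have hpow : 2 ^ g * (n + 1 - g + 1) ≤
          2 ^ (g - 1) * (n - (g - 1) + 1) + 2 ^ (g - 1) * (n - (g - 1) + 1) := by
        rcases g with _ | g
        · simp
        · simp [pow_succ, Nat.add_sub_add_right]; ring_nf; omega
      rw [ncard_eq_ncard_preimage_add]
      linarith [hhalves false, hhalves true]

end LTQ

namespace SimpleGraph.IsRSeparation

variable {W : Type*} [Finite W] {H : SimpleGraph W} {g : ℕ} {C D : Set W}

theorem two_pow_mul_le_ncard_compl_of_isExitMatching (h : H.IsRSeparation g C D) {n : ℕ}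
    {f : LTQ n ↪g H} {σ : (Fin n → Bool) → W} (hf : f.IsExitMatching σ)
    (hD : (f ⁻¹' D).Nonempty) (hσD : ∀ x ∈ f ⁻¹' D, σ x ∉ D) :
    2 ^ g * (n - g + 1) ≤ (C ∪ D)ᶜ.ncard :=
  calc 2 ^ g * (n - g + 1) ≤ ((LTQ n).closedNbhd (f ⁻¹' D)).ncard :=
        LTQ.two_pow_mul_le_ncard_closedNbhd hD fun x hx =>
          (h.le_degree_right _ hx).trans (hf.ncard_neighborSet_inter_le (hσD x hx))
    _ ≤ (H.closedNbhd D \ D).ncard := hf.ncard_closedNbhd_preimage_le hσD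
    _ ≤ (C ∪ D)ᶜ.ncard := Set.ncard_le_ncard h.closedNbhd_diff_subset

end SimpleGraph.IsRSeparation

namespace LTQ

open SimpleGraph

theorem two_pow_mul_le_ncard_compl {n g : ℕ} {C D : Set (Fin n → Bool)}
    (h : (LTQ n).IsRSeparation g C D) (hC : C.Nonempty) (hD : D.Nonempty) :
    2 ^ g * (n - g) ≤ (C ∪ D)ᶜ.ncard := by
  induction n generalizing g with
  | zero => simp
  | succ n ih =>
    have hhalf_bound {C D : Set (Fin (n + 1) → Bool)} (h : (LTQ (n + 1)).IsRSeparation g C D)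
        {b : Bool} (hD : D.Nonempty) (hb : D ⊆ Set.range (snocEmbedding n b)) :
        2 ^ g * (n + 1 - g) ≤ (C ∪ D)ᶜ.ncard := by
      have hf := isExitMatching_snocEmbedding (n := n) b
      refine le_trans (Nat.mul_le_mul_left _ (by omega))
        (h.two_pow_mul_le_ncard_compl_of_isExitMatching hf (hD.preimage' hb)
          fun x _ hσ => hf.notMem_range x (hb hσ))
    by_cases hDhalf : ∃ b, D ⊆ Set.range (snocEmbedding n b)
    · obtain ⟨b, hb⟩ := hDhalf
      exact hhalf_bound h hD hb
    by_cases hChalf : ∃ b, C ⊆ Set.range (snocEmbedding n b)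
    · obtain ⟨b, hb⟩ := hChalf
      rw [Set.union_comm]
      exact hhalf_bound h.symm hC hb
    push Not at hDhalf hChalf
    have hsep (b : Bool) := (isExitMatching_snocEmbedding (n := n) b).isRSeparation_comap h
    rcases Nat.eq_zero_or_pos n with rfl | hn
    · obtain ⟨x, hxC⟩ := preimage_snocEmbedding_nonempty hChalf false
      obtain ⟨y, hyD⟩ := preimage_snocEmbedding_nonempty hDhalf false
      exact absurd (Subsingleton.elim x y ▸ hxC) (Set.disjoint_left.1 (hsep false).disjoint · hyD)
    have hhalves (b : Bool) : 2 ^ (g - 1) * (n - (g - 1)) ≤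
        (snocEmbedding n b ⁻¹' (C ∪ D)ᶜ).ncard :=
      ih (hsep b) (preimage_snocEmbedding_nonempty hChalf b)
        (preimage_snocEmbedding_nonempty hDhalf b)
    have hpow :
        2 ^ g * (n + 1 - g) ≤ 2 ^ (g - 1) * (n - (g - 1)) + 2 ^ (g - 1) * (n - (g - 1)) := by
      rcases g with _ | g
      · simp; omega
      · simp [pow_succ, Nat.add_sub_add_right]; ring_nf; omega
    rw [ncard_eq_ncard_preimage_add]
    linarith [hhalves false, hhalves true]

end LTQ

namespace SimpleGraph.IsRSeparation

variable {W : Type*} [Finite W] {H : SimpleGraph W} {g : ℕ} {C D : Set W}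

theorem two_pow_mul_le_ncard_preimage_compl (h : H.IsRSeparation g C D) {n : ℕ}
    {f : LTQ n ↪g H} {σ : (Fin n → Bool) → W} (hf : f.IsExitMatching σ)
    (hC : (f ⁻¹' C).Nonempty) (hD : (f ⁻¹' D).Nonempty) :
    2 ^ (g - 1) * (n - (g - 1)) ≤ (f ⁻¹' (C ∪ D)ᶜ).ncard :=
  LTQ.two_pow_mul_le_ncard_compl (hf.isRSeparation_comap h) hC hD

end SimpleGraph.IsRSeparation

namespace LTQ

open SimpleGraph

variable {n g : ℕ}

/-- A copy of `LTQ g` inside `LTQ n`. -/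
def lowCube (n g : ℕ) : Set (Fin n → Bool) := {a | ∀ j : Fin n, g ≤ (j : ℕ) → a j = false}

lemma move_mem_lowCube {a : Fin n → Bool} (ha : a ∈ lowCube n g) {k : Fin n}
    (hk : (k : ℕ) < g) : move a k ∈ lowCube n g := fun j hj => by
  rw [move_of_lt a (by omega)]
  exact ha j hj

lemma ncard_lowCube_le : (lowCube n g).ncard ≤ 2 ^ g := by
  have hinj : Set.InjOn (fun a (i : Fin g) => if h : (i : ℕ) < n then a ⟨i, h⟩ else false)
      (lowCube n g) := by
    intro a ha a' ha' h
    funext j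
    by_cases hj : (j : ℕ) < g
    · simpa using congrFun h ⟨j, hj⟩
    · rw [ha j (by omega), ha' j (by omega)]
  simpa using Set.ncard_le_ncard_of_injOn _ (fun _ _ => Set.mem_univ _) hinj

lemma ncard_closedNbhd_lowCube_diff_le :
    ((LTQ n).closedNbhd (lowCube n g) \ lowCube n g).ncard ≤ 2 ^ g * (n - g) := by
  have hsub : (LTQ n).closedNbhd (lowCube n g) \ lowCube n g ⊆
      (fun p : (Fin n → Bool) × Fin (n - g) => move p.1 ⟨g + p.2, by omega⟩) ''
        (lowCube n g ×ˢ Set.univ) := by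
    rintro x ⟨hx | ⟨a, ha, hax⟩, hxS⟩
    · exact absurd hx hxS
    obtain ⟨k, rfl⟩ := adj_iff.1 hax
    have hk : g ≤ (k : ℕ) := by
      by_contra hk
      exact hxS (move_mem_lowCube ha (by omega))
    refine ⟨(a, ⟨k - g, by have := k.isLt; omega⟩), ⟨ha, trivial⟩, ?_⟩
    simp only
    congr
    omega
  calc _ ≤ _ := Set.ncard_le_ncard hsub
    _ ≤ (lowCube n g ×ˢ (Set.univ : Set (Fin (n - g)))).ncard := Set.ncard_image_le
    _ ≤ 2 ^ g * (n - g) := by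
        rw [Set.ncard_prod, Set.ncard_univ, Nat.card_eq_fintype_card, Fintype.card_fin]
        exact Nat.mul_le_mul_right _ ncard_lowCube_le

/-- A move in a direction `1 ≤ k < g` commutes with the moves that leave the low cube. -/
lemma mem_closedNbhd_lowCube_of_move {a : Fin n → Bool} {k : Fin n} (hk : 1 ≤ (k : ℕ))
    (hkg : (k : ℕ) < g) (h : move a k ∈ (LTQ n).closedNbhd (lowCube n g)) :
    a ∈ (LTQ n).closedNbhd (lowCube n g) := by
  have hmem {y} (hy : y ∈ lowCube n g) (hya : move a k = y) : a ∈ lowCube n g := by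
    rw [← move_move a k, hya]
    exact move_mem_lowCube hy hkg
  rcases h with h | ⟨y, hy, hya⟩
  · exact Or.inl (hmem h rfl)
  obtain ⟨k', hk'⟩ := adj_iff.1 hya
  by_cases hk'g : (k' : ℕ) < g
  · exact Or.inl (hmem (move_mem_lowCube hy hk'g) hk')
  refine Or.inr ⟨move y k, move_mem_lowCube hy hkg, adj_iff.2 ⟨k', ?_⟩⟩
  rw [move_comm y hk (by omega), ← hk', move_move]

end LTQ

namespace LeTQ

open SimpleGraph LTQ

variable {s t g : ℕ}

lemma adj_false_iff {a : Fin s → Bool} {b : Fin t → Bool} {w : LeTQVert s t} :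
    (LeTQ s t).Adj (a, b, false) w ↔
      w = (a, b, true) ∨ ∃ a', (LTQ s).Adj a a' ∧ w = (a', b, false) := by
  obtain ⟨a', b', c'⟩ := w
  simp only [LeTQ, LeTQAdjOne, LTQ, Prod.mk.injEq]
  cases c' <;> simp <;> grind

lemma adj_true_iff {a : Fin s → Bool} {b : Fin t → Bool} {w : LeTQVert s t} :
    (LeTQ s t).Adj (a, b, true) w ↔
      w = (a, b, false) ∨ ∃ b', (LTQ t).Adj b b' ∧ w = (a, b', true) := by
  obtain ⟨a', b', c'⟩ := w
  simp only [LeTQ, LeTQAdjOne, LTQ, Prod.mk.injEq]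
  cases c' <;> simp <;> grind

def rowEmbedding (b : Fin t → Bool) : LTQ s ↪g LeTQ s t where
  toFun a := (a, b, false)
  inj' _ _ h := by simpa using h
  map_rel_iff' := by
    intro a a'
    change (LeTQ s t).Adj (a, b, false) (a', b, false) ↔ _
    simp [adj_false_iff]

def colEmbedding (a : Fin s → Bool) : LTQ t ↪g LeTQ s t where
  toFun b := (a, b, true)
  inj' _ _ h := by simpa using h
  map_rel_iff' := by
    intro b b'
    change (LeTQ s t).Adj (a, b, true) (a, b', true) ↔ _
    simp [adj_true_iff]

@[simp] lemma rowEmbedding_apply (b : Fin t → Bool) (a : Fin s → Bool) :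
    rowEmbedding b a = (a, b, false) := rfl

@[simp] lemma colEmbedding_apply (a : Fin s → Bool) (b : Fin t → Bool) :
    colEmbedding a b = (a, b, true) := rfl

lemma isExitMatching_rowEmbedding (b : Fin t → Bool) :
    (rowEmbedding (s := s) b).IsExitMatching (fun a => (a, b, true)) where
  adj _ := by simp [adj_false_iff]
  notMem_range _ := by simp
  eq_of_adj a w haw hw := by
    rcases adj_false_iff.1 haw with rfl | ⟨a', -, rfl⟩
    · rfl
    · exact absurd ⟨a', rfl⟩ hw
  injective _ _ h := congrArg Prod.fst h

lemma isExitMatching_colEmbedding (a : Fin s → Bool) :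
    (colEmbedding (t := t) a).IsExitMatching (fun b => (a, b, false)) where
  adj _ := by simp [adj_true_iff]
  notMem_range _ := by simp
  eq_of_adj b w hbw hw := by
    rcases adj_true_iff.1 hbw with rfl | ⟨b', -, rfl⟩
    · rfl
    · exact absurd ⟨b', rfl⟩ hw
  injective _ _ h := congrArg (·.2.1) h

lemma ncard_preimage_row_add_ncard_preimage_col_le (S : Set (LeTQVert s t))
    (b : Fin t → Bool) (a : Fin s → Bool) :
    (rowEmbedding b ⁻¹' S).ncard + (colEmbedding a ⁻¹' S).ncard ≤ S.ncard := by
  have hdisj : Disjoint (S ∩ Set.range (rowEmbedding b)) (S ∩ Set.range (colEmbedding a)) := by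
    rw [Set.disjoint_left]
    rintro _ ⟨-, a', rfl⟩ ⟨-, b', h⟩
    simp at h
  rw [Set.ncard_preimage_eq_ncard_inter_range (rowEmbedding b).injective,
    Set.ncard_preimage_eq_ncard_inter_range (colEmbedding a).injective,
    ← Set.ncard_union_eq hdisj]
  exact Set.ncard_le_ncard (Set.union_subset Set.inter_subset_left Set.inter_subset_left)

section LowerBound

variable {C D : Set (LeTQVert s t)}

lemma two_pow_mul_le_ncard_compl_of_forall_layer_false (h : (LeTQ s t).IsRSeparation g C D)
    (hD : D.Nonempty) (hD0 : ∀ v ∈ D, v.2.2 = false) :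
    2 ^ g * (s - g + 1) ≤ (C ∪ D)ᶜ.ncard := by
  obtain ⟨⟨a, b, c⟩, hv⟩ := hD
  obtain rfl : c = false := hD0 _ hv
  exact h.two_pow_mul_le_ncard_compl_of_isExitMatching (isExitMatching_rowEmbedding b) ⟨a, hv⟩
    fun x _ hx => by simpa using hD0 _ hx

lemma two_pow_mul_le_ncard_compl_of_forall_layer_true (h : (LeTQ s t).IsRSeparation g C D)
    (hD : D.Nonempty) (hD1 : ∀ v ∈ D, v.2.2 = true) :
    2 ^ g * (t - g + 1) ≤ (C ∪ D)ᶜ.ncard := by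
  obtain ⟨⟨a, b, c⟩, hv⟩ := hD
  obtain rfl : c = true := hD1 _ hv
  exact h.two_pow_mul_le_ncard_compl_of_isExitMatching (isExitMatching_colEmbedding a) ⟨b, hv⟩
    fun x _ hx => by simpa using hD1 _ hx

/-- With no column meeting both sides, every row meets the cut: a mixed row by the bound on
`LTQ s`, any other row through the columns of a `C`-vertex and a `D`-vertex of layer `1`. -/
lemma two_pow_le_ncard_compl_of_forall_col_not_mixed (h : (LeTQ s t).IsRSeparation g C D)
    (hs : 1 ≤ s) (hg : g ≤ s) (hC1 : ∃ v ∈ C, v.2.2 = true) (hD1 : ∃ v ∈ D, v.2.2 = true)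
    (hcol : ∀ a, ¬ ((colEmbedding a ⁻¹' C).Nonempty ∧ (colEmbedding a ⁻¹' D).Nonempty)) :
    2 ^ t ≤ (C ∪ D)ᶜ.ncard := by
  obtain ⟨⟨a₁, b₁, c₁⟩, hD₁, rfl : c₁ = true⟩ := hD1
  obtain ⟨⟨a₂, b₂, c₂⟩, hC₂, rfl : c₂ = true⟩ := hC1
  suffices hrow : ∀ b, ∃ v ∈ (C ∪ D)ᶜ, v.2.1 = b by
    simpa using Set.SurjOn.card_le_ncard (π := fun v : LeTQVert s t => v.2.1) fun b _ => hrow b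
  intro b
  by_cases hmix : (rowEmbedding b ⁻¹' C).Nonempty ∧ (rowEmbedding b ⁻¹' D).Nonempty
  · have hpos : 0 < 2 ^ (g - 1) * (s - (g - 1)) := Nat.mul_pos (by positivity) (by omega)
    obtain ⟨a, ha⟩ := Set.nonempty_of_ncard_ne_zero (hpos.trans_le
      (h.two_pow_mul_le_ncard_preimage_compl (isExitMatching_rowEmbedding b) hmix.1 hmix.2)).ne'
    exact ⟨_, ha, rfl⟩
  have hp : ((a₁, b, true) : LeTQVert s t) ∉ C := fun hC => hcol a₁ ⟨⟨b, hC⟩, ⟨b₁, hD₁⟩⟩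
  have hp' : ((a₂, b, true) : LeTQVert s t) ∉ D := fun hD => hcol a₂ ⟨⟨b₂, hC₂⟩, ⟨b, hD⟩⟩
  rcases h.notMem_or_notMem_of_adj (adj_true_iff.2 (Or.inl rfl))
    (adj_true_iff.2 (Or.inl rfl)) hp hp' (fun hq hq' => hmix ⟨⟨a₂, hq'⟩, ⟨a₁, hq⟩⟩) with
    hw | hw | hw | hw <;> exact ⟨_, hw, rfl⟩

lemma two_pow_le_ncard_compl_of_forall_row_not_mixed (h : (LeTQ s t).IsRSeparation g C D)
    (ht : 1 ≤ t) (hg : g ≤ t) (hC0 : ∃ v ∈ C, v.2.2 = false) (hD0 : ∃ v ∈ D, v.2.2 = false)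
    (hrow : ∀ b, ¬ ((rowEmbedding b ⁻¹' C).Nonempty ∧ (rowEmbedding b ⁻¹' D).Nonempty)) :
    2 ^ s ≤ (C ∪ D)ᶜ.ncard := by
  obtain ⟨⟨a₁, b₁, c₁⟩, hD₁, rfl : c₁ = false⟩ := hD0
  obtain ⟨⟨a₂, b₂, c₂⟩, hC₂, rfl : c₂ = false⟩ := hC0
  suffices hcol : ∀ a, ∃ v ∈ (C ∪ D)ᶜ, v.1 = a by
    simpa using Set.SurjOn.card_le_ncard (π := fun v : LeTQVert s t => v.1) fun a _ => hcol a
  intro a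
  by_cases hmix : (colEmbedding a ⁻¹' C).Nonempty ∧ (colEmbedding a ⁻¹' D).Nonempty
  · have hpos : 0 < 2 ^ (g - 1) * (t - (g - 1)) := Nat.mul_pos (by positivity) (by omega)
    obtain ⟨b, hb⟩ := Set.nonempty_of_ncard_ne_zero (hpos.trans_le
      (h.two_pow_mul_le_ncard_preimage_compl (isExitMatching_colEmbedding a) hmix.1 hmix.2)).ne'
    exact ⟨_, hb, rfl⟩
  have hp : ((a, b₁, false) : LeTQVert s t) ∉ C := fun hC => hrow b₁ ⟨⟨a, hC⟩, ⟨a₁, hD₁⟩⟩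
  have hp' : ((a, b₂, false) : LeTQVert s t) ∉ D := fun hD => hrow b₂ ⟨⟨a₂, hC₂⟩, ⟨a, hD⟩⟩
  rcases h.notMem_or_notMem_of_adj (adj_false_iff.2 (Or.inl rfl))
    (adj_false_iff.2 (Or.inl rfl)) hp hp' (fun hq hq' => hmix ⟨⟨b₂, hq'⟩, ⟨b₁, hq⟩⟩) with
    hw | hw | hw | hw <;> exact ⟨_, hw, rfl⟩

lemma two_pow_mul_le_ncard_compl_of_mixed_row_col (h : (LeTQ s t).IsRSeparation g C D)
    {b : Fin t → Bool} (hbC : (rowEmbedding b ⁻¹' C).Nonempty)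
    (hbD : (rowEmbedding b ⁻¹' D).Nonempty) {a : Fin s → Bool}
    (haC : (colEmbedding a ⁻¹' C).Nonempty) (haD : (colEmbedding a ⁻¹' D).Nonempty)
    (hs : 1 ≤ s) (hst : s ≤ t) (hg : g ≤ s) :
    2 ^ g * (s - g + 1) ≤ (C ∪ D)ᶜ.ncard :=
  calc 2 ^ g * (s - g + 1) ≤ 2 ^ (g - 1) * (s - (g - 1)) + 2 ^ (g - 1) * (t - (g - 1)) := by
        rcases g with _ | g
        · simp; omega
        · have h1 : 2 ^ g * (s - g) ≤ 2 ^ g * (t - g) := Nat.mul_le_mul_left _ (by omega)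
          have h2 := Nat.mul_le_mul_left (2 ^ g * 2) (show s - (g + 1) + 1 ≤ s - g by omega)
          simp only [pow_succ, Nat.add_sub_cancel]
          linarith
    _ ≤ (rowEmbedding b ⁻¹' (C ∪ D)ᶜ).ncard + (colEmbedding a ⁻¹' (C ∪ D)ᶜ).ncard :=
        Nat.add_le_add
          (h.two_pow_mul_le_ncard_preimage_compl (isExitMatching_rowEmbedding b) hbC hbD)
          (h.two_pow_mul_le_ncard_preimage_compl (isExitMatching_colEmbedding a) haC haD)
    _ ≤ (C ∪ D)ᶜ.ncard := ncard_preimage_row_add_ncard_preimage_col_le _ b a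

theorem two_pow_mul_le_ncard_compl (h : (LeTQ s t).IsRSeparation g C D) (hC : C.Nonempty)
    (hD : D.Nonempty) (hs : 1 ≤ s) (hst : s ≤ t) (hg : g ≤ s) :
    2 ^ g * (s - g + 1) ≤ (C ∪ D)ᶜ.ncard := by
  have hst' : 2 ^ g * (s - g + 1) ≤ 2 ^ g * (t - g + 1) := Nat.mul_le_mul_left _ (by omega)
  have hpow : 2 ^ g * (s - g + 1) ≤ 2 ^ s :=
    calc 2 ^ g * (s - g + 1) ≤ 2 ^ g * 2 ^ (s - g) := Nat.mul_le_mul_left _ Nat.lt_two_pow_self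
      _ = 2 ^ s := by rw [← pow_add, Nat.add_sub_cancel' hg]
  by_cases hD0 : ∀ v ∈ D, v.2.2 = false
  · exact two_pow_mul_le_ncard_compl_of_forall_layer_false h hD hD0
  by_cases hC0 : ∀ v ∈ C, v.2.2 = false
  · rw [Set.union_comm]
    exact two_pow_mul_le_ncard_compl_of_forall_layer_false h.symm hC hC0
  by_cases hD1 : ∀ v ∈ D, v.2.2 = true
  · exact hst'.trans (two_pow_mul_le_ncard_compl_of_forall_layer_true h hD hD1)
  by_cases hC1 : ∀ v ∈ C, v.2.2 = true
  · rw [Set.union_comm]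
    exact hst'.trans (two_pow_mul_le_ncard_compl_of_forall_layer_true h.symm hC hC1)
  by_cases hrow : ∃ b, (rowEmbedding b ⁻¹' C).Nonempty ∧ (rowEmbedding b ⁻¹' D).Nonempty
  · by_cases hcol : ∃ a, (colEmbedding a ⁻¹' C).Nonempty ∧ (colEmbedding a ⁻¹' D).Nonempty
    · obtain ⟨b, hbC, hbD⟩ := hrow
      obtain ⟨a, haC, haD⟩ := hcol
      exact two_pow_mul_le_ncard_compl_of_mixed_row_col h hbC hbD haC haD hs hst hg
    · exact hpow.trans ((Nat.pow_le_pow_right two_pos hst).trans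
        (two_pow_le_ncard_compl_of_forall_col_not_mixed h hs hg (by simpa using hC0)
          (by simpa using hD0) (not_exists.1 hcol)))
  · exact hpow.trans
      (two_pow_le_ncard_compl_of_forall_row_not_mixed h (by omega) (by omega) (by simpa using hC1)
        (by simpa using hD1) (not_exists.1 hrow))

end LowerBound

theorem two_pow_mul_le_ncard_of_isCut {F : Set (LeTQVert s t)}
    (hdeg : ∀ v ∉ F, g ≤ ((LeTQ s t).neighborSet v \ F).ncard)
    (hconn : ¬ ((LeTQ s t).induce Fᶜ).Preconnected) (hs : 1 ≤ s) (hst : s ≤ t) (hg : g ≤ s) :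
    2 ^ g * (s - g + 1) ≤ F.ncard := by
  obtain ⟨C, D, hC, hD, h, rfl⟩ := exists_isRSeparation hdeg hconn
  exact two_pow_mul_le_ncard_compl h hC hD hs hst hg

/-- The open neighbourhood of the copy of `lowCube s g` in row `0`. -/
def cut (s t g : ℕ) : Set (LeTQVert s t) :=
  rowEmbedding (fun _ => false) '' ((LTQ s).closedNbhd (lowCube s g) \ lowCube s g) ∪
    (fun a => (a, fun _ => false, true)) '' lowCube s g

lemma mem_cut_false {a : Fin s → Bool} {b : Fin t → Bool} :
    (a, b, false) ∈ cut s t g ↔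
      b = (fun _ => false) ∧ a ∈ (LTQ s).closedNbhd (lowCube s g) \ lowCube s g := by
  simp [cut, and_comm, eq_comm]

lemma mem_cut_true {a : Fin s → Bool} {b : Fin t → Bool} :
    (a, b, true) ∈ cut s t g ↔ b = (fun _ => false) ∧ a ∈ lowCube s g := by
  simp [cut, and_comm, eq_comm]

lemma ncard_cut_le : (cut s t g).ncard ≤ 2 ^ g * (s - g + 1) :=
  calc (cut s t g).ncard
      ≤ ((LTQ s).closedNbhd (lowCube s g) \ lowCube s g).ncard + (lowCube s g).ncard := by
        refine (Set.ncard_union_le _ _).trans (Nat.add_le_add ?_ ?_) <;>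
          exact Set.ncard_image_le
    _ ≤ 2 ^ g * (s - g) + 2 ^ g := Nat.add_le_add ncard_closedNbhd_lowCube_diff_le ncard_lowCube_le
    _ = 2 ^ g * (s - g + 1) := by ring

lemma not_preconnected_induce_compl_cut (ht : 1 ≤ t) :
    ¬ ((LeTQ s t).induce (cut s t g)ᶜ).Preconnected := by
  refine not_preconnected_induce_compl (A := rowEmbedding (fun _ => false) '' lowCube s g)
    ?_ ⟨_, (fun _ => false), fun _ _ => rfl, rfl⟩ ?_ ?_
  · rw [Set.disjoint_left]
    rintro _ ⟨a, ha, rfl⟩ h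
    exact (mem_cut_false.1 h).2.2 ha
  · rintro _ ⟨a, ha, rfl⟩ w haw
    rcases adj_false_iff.1 haw with rfl | ⟨a', ha', rfl⟩
    · exact Or.inr (mem_cut_true.2 ⟨rfl, ha⟩)
    · by_cases ha'S : a' ∈ lowCube s g
      · exact Or.inl ⟨a', ha'S, rfl⟩
      · exact Or.inr (mem_cut_false.2 ⟨rfl, mem_closedNbhd_of_adj ha ha', ha'S⟩)
  · intro h
    have hw : ((fun _ => false), (fun _ => true), true) ∈ rowEmbedding (fun _ => false) ''
        lowCube s g ∪ cut s t g := h ▸ Set.mem_univ _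
    rcases hw with ⟨a, -, h⟩ | h
    · simp at h
    · simpa using congrFun (mem_cut_true.1 h).1 ⟨0, ht⟩

lemma le_ncard_neighborSet_diff_cut_of_false (hs : 1 ≤ s) (hg : g ≤ s) {a : Fin s → Bool}
    {b : Fin t → Bool} (hv : (a, b, false) ∉ cut s t g) :
    g ≤ ((LeTQ s t).neighborSet (a, b, false) \ cut s t g).ncard := by
  rw [mem_cut_false] at hv
  by_cases hb : b = fun _ => false
  swap
  · exact (Fin.ncard_setOf_val_lt hg).ge.trans
      ((rowEmbedding b).ncard_le_ncard_neighborSet_diff a fun k _ h => hb (mem_cut_false.1 h).1)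
  subst hb
  by_cases ha : a ∈ lowCube s g
  · exact (Fin.ncard_setOf_val_lt hg).ge.trans
      ((rowEmbedding _).ncard_le_ncard_neighborSet_diff a fun k hk h =>
        (mem_cut_false.1 h).2.2 (move_mem_lowCube ha hk))
  have haN : a ∉ (LTQ s).closedNbhd (lowCube s g) := fun h => hv ⟨rfl, h, ha⟩
  have hK := Set.pred_ncard_le_ncard_sdiff_singleton {k : Fin s | (k : ℕ) < g} ⟨0, hs⟩
  rw [Fin.ncard_setOf_val_lt hg] at hK
  have hnbrs := (isExitMatching_rowEmbedding (t := t) fun _ => false)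
    |>.ncard_add_one_le_ncard_neighborSet_diff a (F := cut s t g)
      (K := {k : Fin s | (k : ℕ) < g} \ {⟨0, hs⟩}) (fun k hk h => haN ?_)
      fun h => ha (mem_cut_true.1 h).2
  · rw [rowEmbedding_apply] at hnbrs
    omega
  have hk0 : 1 ≤ (k : ℕ) := by
    have := hk.2
    simp only [Set.mem_singleton_iff, Fin.ext_iff] at this
    omega
  exact mem_closedNbhd_lowCube_of_move hk0 hk.1 (mem_cut_false.1 h).2.1

lemma le_ncard_neighborSet_diff_cut_of_true (hst : s ≤ t) (hg : g ≤ s) {a : Fin s → Bool}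
    {b : Fin t → Bool} (hv : (a, b, true) ∉ cut s t g) :
    g ≤ ((LeTQ s t).neighborSet (a, b, true) \ cut s t g).ncard := by
  rw [mem_cut_true] at hv
  by_cases ha : a ∈ lowCube s g
  swap
  · exact (Fin.ncard_setOf_val_lt (hg.trans hst)).ge.trans
      ((colEmbedding a).ncard_le_ncard_neighborSet_diff b fun k _ h => ha (mem_cut_true.1 h).2)
  have hb : b ≠ fun _ => false := fun hb => hv ⟨hb, ha⟩
  obtain ⟨k₀, hk₀⟩ : ∃ k₀ : Fin t, ∀ k ≠ k₀, move b k ≠ fun _ => false := by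
    by_cases h : ∃ k₀, move b k₀ = fun _ => false
    · obtain ⟨k₀, hk₀⟩ := h
      exact ⟨k₀, fun k hk h => hk (move_injective b (h.trans hk₀.symm))⟩
    · obtain ⟨j, -⟩ := Function.ne_iff.1 hb
      exact ⟨j, fun k _ hk => h ⟨k, hk⟩⟩
  have hK := Set.pred_ncard_le_ncard_sdiff_singleton {k : Fin t | (k : ℕ) < g} k₀
  rw [Fin.ncard_setOf_val_lt (hg.trans hst)] at hK
  have hnbrs := (isExitMatching_colEmbedding a).ncard_add_one_le_ncard_neighborSet_diff b
    (F := cut s t g) (K := {k : Fin t | (k : ℕ) < g} \ {k₀})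
    (fun k hk h => hk₀ k hk.2 (mem_cut_true.1 h).1) fun h => hb (mem_cut_false.1 h).1
  rw [colEmbedding_apply] at hnbrs
  omega

lemma le_ncard_neighborSet_diff_cut (hs : 1 ≤ s) (hst : s ≤ t) (hg : g ≤ s)
    {v : LeTQVert s t} (hv : v ∉ cut s t g) :
    g ≤ ((LeTQ s t).neighborSet v \ cut s t g).ncard := by
  obtain ⟨a, b, _ | _⟩ := v
  · exact le_ncard_neighborSet_diff_cut_of_false hs hg hv
  · exact le_ncard_neighborSet_diff_cut_of_true hst hg hv

end LeTQ

/-- The R^g-vertex-connectivity of LeTQ(s,t) is 2^g(s-g+1). -/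
theorem stmt11 (s t g : ℕ) (hs : 1 ≤ s) (hst : s ≤ t) (hg : g ≤ s) :
    IsLeast {n : ℕ | ∃ F : Set (LeTQVert s t),
      (∀ v ∉ F, g ≤ ((LeTQ s t).neighborSet v \ F).ncard) ∧
      ¬ ((LeTQ s t).induce Fᶜ).Preconnected ∧ F.ncard = n}
      (2 ^ g * (s - g + 1)) := by
  have hdeg (v) (hv : v ∉ LeTQ.cut s t g) := LeTQ.le_ncard_neighborSet_diff_cut hs hst hg hv
  have hconn := LeTQ.not_preconnected_induce_compl_cut (g := g) (s := s) (by omega : 1 ≤ t)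
  refine ⟨⟨LeTQ.cut s t g, hdeg, hconn, le_antisymm LeTQ.ncard_cut_le ?_⟩, ?_⟩
  · exact LeTQ.two_pow_mul_le_ncard_of_isCut hdeg hconn hs hst hg
  · rintro _ ⟨F, hdegF, hconnF, rfl⟩
    exact LeTQ.two_pow_mul_le_ncard_of_isCut hdegF hconnF hs hst hg
end
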